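/- For all k, r ∈ ℕ, the Saras triangle entry admits the explicit alternating-sum formula μ(k, r) = Σ_{i=0}^{r} (−1)^i · C(r, i) · (r + 1 − i)^k, where the right-hand side is interpreted as an integer (and is in fact a nonnegative integer equal to μ(k, r)). -/

import Mathlib

open Finset Nat

def saras : ℕ → ℕ → ℕ
  | _, 0 => 1
  | 0, _ + 1 => 0
  | k + 1, r + 1 =>
      if r + 1 ≤ k + 1 then (r + 1) * saras k r + (r + 2) * saras k (r + 1) else 0

/-! Both sides satisfy the same boundary values and the recurrence
`μ(k+1, r+1) = (r+1) μ(k, r) + (r+2) μ(k, r+1)`, which for `saras` holds for all `k, r`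
because both sides vanish when `r > k`. For the alternating sum, the recurrence comes from
splitting `(r+2-i)^(k+1) = (r+2) (r+2-i)^k - i (r+2-i)^k` and absorbing the factor `i`
into the binomial coefficient, `i C(r+1, i) = (r+1) C(r, i-1)`. -/

theorem saras_eq_zero_of_lt : ∀ {k r : ℕ}, k < r → saras k r = 0
  | _, 0, h => absurd h (Nat.not_lt_zero _)
  | 0, _ + 1, _ => rfl
  | _ + 1, _ + 1, h => if_neg (by omega)

theorem saras_succ_succ (k r : ℕ) :
    saras (k + 1) (r + 1) = (r + 1) * saras k r + (r + 2) * saras k (r + 1) := by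
  by_cases h : r ≤ k
  · exact if_pos (by omega)
  · rw [saras_eq_zero_of_lt (by omega : k + 1 < r + 1), saras_eq_zero_of_lt (by omega : k < r),
      saras_eq_zero_of_lt (by omega : k < r + 1)]
    ring

theorem sum_range_mul_alternating_choose_mul {R : Type*} [CommRing R] (n : ℕ) (f : ℕ → R) :
    ∑ i ∈ range (n + 2), (i : R) * ((-1) ^ i * ((n + 1).choose i : R) * f i) =
      -((n + 1 : R) * ∑ i ∈ range (n + 1), (-1) ^ i * (n.choose i : R) * f (i + 1)) := by
  rw [sum_range_succ', Nat.cast_zero, zero_mul, add_zero, mul_sum, ← sum_neg_distrib]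
  refine sum_congr rfl fun i _ => ?_
  have absorb := congrArg (Nat.cast (R := R)) (Nat.add_one_mul_choose_eq n i)
  push_cast at absorb ⊢
  linear_combination ((-1 : R) ^ i * f (i + 1)) * absorb

def sarasSum (k r : ℕ) : ℤ :=
  ∑ i ∈ range (r + 1), (-1) ^ i * (r.choose i : ℤ) * ((r + 1 - i : ℕ) : ℤ) ^ k

theorem sarasSum_zero_right (k : ℕ) : sarasSum k 0 = 1 := by
  simp [sarasSum]

theorem sarasSum_zero_succ (r : ℕ) : sarasSum 0 (r + 1) = 0 := by
  simp only [sarasSum, pow_zero, mul_one]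
  exact Int.alternating_sum_range_choose_of_ne r.succ_ne_zero

theorem sarasSum_succ_succ (k r : ℕ) :
    sarasSum (k + 1) (r + 1) = (r + 1) * sarasSum k r + (r + 2) * sarasSum k (r + 1) := by
  have split : ∀ i ∈ range (r + 2),
      (-1) ^ i * ((r + 1).choose i : ℤ) * ((r + 1 + 1 - i : ℕ) : ℤ) ^ (k + 1) =
        (r + 2) * ((-1) ^ i * ((r + 1).choose i : ℤ) * ((r + 1 + 1 - i : ℕ) : ℤ) ^ k)
          - i * ((-1) ^ i * ((r + 1).choose i : ℤ) * ((r + 1 + 1 - i : ℕ) : ℤ) ^ k) := by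
    intro i hi
    rw [Nat.cast_sub (by rw [mem_range] at hi; omega)]
    push_cast
    ring
  rw [sarasSum, sum_congr rfl split, sum_sub_distrib, ← mul_sum,
    sum_range_mul_alternating_choose_mul]
  simp only [Nat.add_sub_add_right, sarasSum]
  ring

theorem stmt7 (k r : ℕ) :
    (saras k r : ℤ) =
      ∑ i ∈ Finset.range (r + 1), (-1) ^ i * (Nat.choose r i : ℤ) * ((r + 1 - i : ℕ) : ℤ) ^ k := by
  change (saras k r : ℤ) = sarasSum k r
  induction k generalizing r with
  | zero =>
    cases r with
    | zero => simp [saras, sarasSum_zero_right]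
    | succ r => simp [saras, sarasSum_zero_succ]
  | succ k ih =>
    cases r with
    | zero => simp [saras, sarasSum_zero_right]
    | succ r =>
      rw [saras_succ_succ, sarasSum_succ_succ, ← ih r, ← ih (r + 1)]
      push_cast
      ring
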